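/- arXiv:1409.1198 — 5 statements merged into one kernel-verified Lean document; each statement's English description precedes it below -/
import Mathlib

section
/- For any ring R and n ≥ 1, the zeroth Hochschild homology of the matrix ring Mat(n, R) is isomorphic to the zeroth Hochschild homology of R: Mat(n,R)/[Mat(n,R), Mat(n,R)] ≅ R/[R,R], with the isomorphism induced by the sum of diagonal entries. -/
/-- The additive subgroup `[S,S]` of a ring `S` generated by all commutators. -/
def commutatorAddSubgroup (S : Type*) [Ring S] : AddSubgroup S :=
  AddSubgroup.closure { x | ∃ a b : S, x = a * b - b * a }

/-- The zeroth Hochschild homology of a ring `S`, `HH₀(S) = S/[S,S]`. -/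
abbrev HH0Ring (S : Type*) [Ring S] := S ⧸ commutatorAddSubgroup S

/-! The trace `HH₀(Mat(n,R)) → HH₀(R)` and the corner embedding `r ↦ r • E_ii` (for a fixed
index `i`) are well defined and mutually inverse: modulo commutators, `r • E_jk = [r • E_jj, E_jk]`
vanishes for `j ≠ k` and `r • E_jj ≡ r • E_ii` via `[r • E_ji, E_ij]`, so every matrix is
congruent to its trace placed in the corner `(i, i)`. -/

section Commutators

variable {S T : Type*} [Ring S] [Ring T]

theorem mul_sub_mul_mem_commutatorAddSubgroup (a b : S) :
    a * b - b * a ∈ commutatorAddSubgroup S :=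
  AddSubgroup.subset_closure ⟨a, b, rfl⟩

theorem commutatorAddSubgroup_le_comap {f : S →+ T}
    (hf : ∀ a b : S, f (a * b - b * a) ∈ commutatorAddSubgroup T) :
    commutatorAddSubgroup S ≤ (commutatorAddSubgroup T).comap f :=
  AddSubgroup.closure_le _ |>.2 fun _ ⟨a, b, hx⟩ => hx ▸ hf a b

def HH0Ring.map (f : S →+ T) (hf : ∀ a b : S, f (a * b - b * a) ∈ commutatorAddSubgroup T) :
    HH0Ring S →+ HH0Ring T :=
  QuotientAddGroup.map _ _ f (commutatorAddSubgroup_le_comap hf)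

end Commutators

namespace Matrix

variable {n R : Type*} [Fintype n] [Ring R]

theorem trace_mul_sub_mul_mem_commutatorAddSubgroup (A B : Matrix n n R) :
    trace (A * B - B * A) ∈ commutatorAddSubgroup R := by
  have h : trace (A * B - B * A) = ∑ i, ∑ j, (A i j * B j i - B j i * A i j) := by
    rw [trace_sub]
    simp only [trace, diag, mul_apply, Finset.sum_sub_distrib]
    rw [Finset.sum_comm (f := fun i j => B j i * A i j)]
  rw [h]
  exact sum_mem fun i _ => sum_mem fun j _ => mul_sub_mul_mem_commutatorAddSubgroup _ _

variable [DecidableEq n]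

theorem single_mul_sub_mul (i : n) (a b : R) :
    single i i (a * b - b * a) = single i i a * single i i b - single i i b * single i i a := by
  rw [single_mul_single_same, single_mul_single_same]
  exact map_sub (singleAddMonoidHom i i) _ _

theorem single_mem_commutatorAddSubgroup_of_ne {i j : n} (h : i ≠ j) (r : R) :
    single i j r ∈ commutatorAddSubgroup (Matrix n n R) := by
  have hcomm : single i j r = single i i r * single i j 1 - single i j 1 * single i i r := by
    rw [single_mul_single_same, single_mul_single_of_ne (h := h.symm), mul_one, sub_zero]
  exact hcomm ▸ mul_sub_mul_mem_commutatorAddSubgroup _ _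

theorem single_sub_single_mem_commutatorAddSubgroup (i j : n) (r : R) :
    single i i r - single j j r ∈ commutatorAddSubgroup (Matrix n n R) := by
  have hcomm : single i i r - single j j r =
      single i j r * single j i 1 - single j i 1 * single i j r := by
    rw [single_mul_single_same, single_mul_single_same, mul_one, one_mul]
  exact hcomm ▸ mul_sub_mul_mem_commutatorAddSubgroup _ _

theorem sub_single_trace_mem_commutatorAddSubgroup (i : n) (M : Matrix n n R) :
    M - single i i (trace M) ∈ commutatorAddSubgroup (Matrix n n R) := by
  induction M using Matrix.induction_on' with
  | h_zero => simp
  | h_add p q hp hq =>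
    have hsplit : p + q - single i i (trace (p + q)) =
        (p - single i i (trace p)) + (q - single i i (trace q)) := by
      rw [trace_add, single_add]
      abel
    exact hsplit ▸ add_mem hp hq
  | h_std_basis j k r =>
    obtain rfl | hjk := eq_or_ne j k
    · rw [trace_single_eq_same]
      exact single_sub_single_mem_commutatorAddSubgroup _ _ _
    · rw [trace_single_eq_of_ne j k r hjk, single_zero, sub_zero]
      exact single_mem_commutatorAddSubgroup_of_ne hjk r

end Matrix

open Matrix in
def HH0Ring.traceEquiv {n R : Type*} [Fintype n] [DecidableEq n] [Ring R] (i : n) :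
    HH0Ring (Matrix n n R) ≃+ HH0Ring R :=
  AddMonoidHom.toAddEquiv
    (HH0Ring.map (traceAddMonoidHom n R) trace_mul_sub_mul_mem_commutatorAddSubgroup)
    (HH0Ring.map (singleAddMonoidHom i i) fun a b => by
      simpa only [singleAddMonoidHom_apply, single_mul_sub_mul] using
        mul_sub_mul_mem_commutatorAddSubgroup _ _)
    (QuotientAddGroup.addMonoidHom_ext _ <| AddMonoidHom.ext fun M =>
      (QuotientAddGroup.eq_iff_sub_mem.2 (sub_single_trace_mem_commutatorAddSubgroup i M)).symm)
    (QuotientAddGroup.addMonoidHom_ext _ <| AddMonoidHom.ext fun r =>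
      congrArg QuotientAddGroup.mk (trace_single_eq_same i r))

/-- For any ring `R` and `n ≥ 1`, `HH₀(Mat(n,R)) ≅ HH₀(R)`, the isomorphism being
induced by the sum of diagonal entries (the trace). -/
theorem HH0_matrix_iso (R : Type*) [Ring R] (n : ℕ) (hn : 1 ≤ n) :
    ∃ e : HH0Ring (Matrix (Fin n) (Fin n) R) ≃+ HH0Ring R,
      ∀ M : Matrix (Fin n) (Fin n) R,
        e (QuotientAddGroup.mk M) = QuotientAddGroup.mk (Matrix.trace M) :=
  ⟨HH0Ring.traceEquiv ⟨0, hn⟩, fun _ => rfl⟩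
end

section
/- The inclusion of a linear category 𝒞 into its Karoubi envelope Kar(𝒞) induces an isomorphism of traces Tr(𝒞) ≅ Tr(Kar(𝒞)). -/
open CategoryTheory
open scoped DirectSum Classical

noncomputable section

/-- The relations `f ≫ g - g ≫ f` defining the trace of a linear category. -/
def traceRelations (C : Type*) [Category C] [Preadditive C] :
    AddSubgroup (⨁ x : C, (x ⟶ x)) :=
  AddSubgroup.closure
    { h | ∃ (x y : C) (f : x ⟶ y) (g : y ⟶ x),
        h = DirectSum.of (fun z : C => z ⟶ z) x (f ≫ g)
          - DirectSum.of (fun z : C => z ⟶ z) y (g ≫ f) }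

/-- The trace of a linear category, `Tr(𝒞) = (⊕_x 𝒞(x,x)) / Span{fg − gf}`. -/
abbrev CatTrace (C : Type*) [Category C] [Preadditive C] :=
  (⨁ x : C, (x ⟶ x)) ⧸ traceRelations C

/-- The class `[f]` of an endomorphism in the trace of the category. -/
def traceClass {C : Type*} [Category C] [Preadditive C] {x : C} (f : x ⟶ x) :
    CatTrace C :=
  QuotientAddGroup.mk (DirectSum.of (fun z : C => z ⟶ z) x f)

/-!
`Tr` is the universal recipient of additive maps on endomorphisms that are invariant under
`f ≫ g ↦ g ≫ f`, so `(P, f) ↦ [f.f]` defines `Tr(Kar 𝒞) → Tr(𝒞)`, which is clearly left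
inverse to the induced map. It is also a right inverse: `f : P ⟶ P` factors as
`(f ≫ i) ≫ p` through the retraction `i : P ⟶ P.X`, `p : P.X ⟶ P`, so
`[f] = [p ≫ f ≫ i] = [f.f]` in `Tr(Kar 𝒞)`.
-/

namespace CatTrace

variable {C : Type*} [Category C] [Preadditive C]

def traceClassHom (x : C) : (x ⟶ x) →+ CatTrace C :=
  (QuotientAddGroup.mk' _).comp (DirectSum.of (fun z : C => z ⟶ z) x)

@[simp]
lemma traceClassHom_apply {x : C} (f : x ⟶ x) : traceClassHom x f = traceClass f := rfl

lemma traceClass_comp_comm {x y : C} (f : x ⟶ y) (g : y ⟶ x) :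
    traceClass (f ≫ g) = traceClass (g ≫ f) :=
  QuotientAddGroup.eq_iff_sub_mem.2 (AddSubgroup.subset_closure ⟨x, y, f, g, rfl⟩)

variable {A : Type*} [AddCommGroup A]

def lift (φ : ∀ x : C, (x ⟶ x) →+ A)
    (hφ : ∀ (x y : C) (f : x ⟶ y) (g : y ⟶ x), φ x (f ≫ g) = φ y (g ≫ f)) :
    CatTrace C →+ A :=
  QuotientAddGroup.lift _ (DirectSum.toAddMonoid φ) <| (AddSubgroup.closure_le _).2 <| by
    rintro _ ⟨x, y, f, g, rfl⟩
    simp [hφ]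

@[simp]
lemma lift_traceClass (φ : ∀ x : C, (x ⟶ x) →+ A)
    (hφ : ∀ (x y : C) (f : x ⟶ y) (g : y ⟶ x), φ x (f ≫ g) = φ y (g ≫ f))
    {x : C} (f : x ⟶ x) : lift φ hφ (traceClass f) = φ x f :=
  (QuotientAddGroup.lift_mk _ _ _).trans (DirectSum.toAddMonoid_of _ _ _)

lemma addHom_ext {φ ψ : CatTrace C →+ A}
    (h : ∀ (x : C) (f : x ⟶ x), φ (traceClass f) = ψ (traceClass f)) : φ = ψ :=
  QuotientAddGroup.addMonoidHom_ext _ <| DirectSum.addHom_ext h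

def map {D : Type*} [Category D] [Preadditive D] (F : C ⥤ D) [F.Additive] :
    CatTrace C →+ CatTrace D :=
  lift (fun x => (traceClassHom (F.obj x)).comp F.mapAddHom) fun x y f g => by
    simp [traceClass_comp_comm]

@[simp]
lemma map_traceClass {D : Type*} [Category D] [Preadditive D] (F : C ⥤ D) [F.Additive]
    {x : C} (f : x ⟶ x) : map F (traceClass f) = traceClass (F.map f) := by
  simp [map]

end CatTrace

namespace CategoryTheory.Idempotents.Karoubi

open CatTrace

variable {C : Type*} [Category C] [Preadditive C]

def traceToBase : CatTrace (Karoubi C) →+ CatTrace C :=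
  lift (fun P => (traceClassHom P.X).comp (inclusionHom P P)) fun _ _ f g =>
    traceClass_comp_comm f.f g.f

@[simp]
lemma traceToBase_traceClass {P : Karoubi C} (f : P ⟶ P) :
    traceToBase (traceClass f) = traceClass f.f := by
  simp [traceToBase, inclusionHom]

lemma traceClass_eq_traceClass_toKaroubi_map {P : Karoubi C} (f : P ⟶ P) :
    traceClass f = traceClass ((toKaroubi C).map f.f) := by
  calc traceClass f = traceClass ((f ≫ decompId_i P) ≫ decompId_p P) := by
        rw [Category.assoc, ← decompId, Category.comp_id]
    _ = traceClass (decompId_p P ≫ f ≫ decompId_i P) := traceClass_comp_comm _ _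
    _ = traceClass ((toKaroubi C).map f.f) := by
        congr 1
        ext
        simp

end CategoryTheory.Idempotents.Karoubi

/-- The inclusion of a linear category `𝒞` into its Karoubi envelope induces an
isomorphism of traces `Tr(𝒞) ≅ Tr(Kar(𝒞))`. -/
theorem catTrace_karoubi (C : Type*) [Category C] [Preadditive C] :
    ∃ e : CatTrace C ≃+ CatTrace (Idempotents.Karoubi C),
      ∀ {x : C} (f : x ⟶ x),
        e (traceClass f) = traceClass ((Idempotents.toKaroubi C).map f) := by
  refine ⟨AddMonoidHom.toAddEquiv (CatTrace.map (Idempotents.toKaroubi C))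
    Idempotents.Karoubi.traceToBase ?_ ?_, CatTrace.map_traceClass _⟩
  · refine CatTrace.addHom_ext fun x f => ?_
    simp
  · refine CatTrace.addHom_ext fun P f => ?_
    simp [Idempotents.Karoubi.traceClass_eq_traceClass_toKaroubi_map f]
end
end

section
/- If two chain endomorphisms F, G of a bounded complex A over a linear category 𝒞 are chain homotopic, then their traced Lefschetz numbers agree: Σᵢ (−1)ⁱ [Fᵢ] = Σᵢ (−1)ⁱ [Gᵢ] in Tr(𝒞). -/
open CategoryTheory
open scoped DirectSum Classical

noncomputable section

open CategoryTheory.Limits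

/-!
Writing `F - G = d h + h d`, the trace identity `[d ∘ h] = [h ∘ d]` shows that
`[Fᵢ] - [Gᵢ] = Pᵢ₋₁ + Pᵢ` with `Pⱼ = [h_j ≫ d_{j+1}]`. With the signs `(−1)ⁱ` these terms
telescope, and the sum vanishes because `P` is supported where `A` is nonzero.
-/

open Function

theorem Finset.sum_comp_sub_one_of_support_subset {M : Type*} [AddCommMonoid M]
    (s : Finset ℤ) (f : ℤ → M) (hf : support f ⊆ s)
    (hf' : support (fun i => f (i - 1)) ⊆ s) :
    ∑ i ∈ s, f (i - 1) = ∑ i ∈ s, f i := by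
  rw [← finsum_eq_sum_of_support_subset _ hf', ← finsum_eq_sum_of_support_subset _ hf]
  exact finsum_comp_equiv (Equiv.subRight 1)

theorem Finset.sum_negOnePow_smul_add_sub_one_eq_zero {M : Type*} [AddCommGroup M]
    (s : Finset ℤ) (P : ℤ → M) (hP : support P ⊆ s)
    (hP' : support (fun i => P (i - 1)) ⊆ s) :
    ∑ i ∈ s, (i.negOnePow : ℤ) • (P (i - 1) + P i) = 0 := by
  set f : ℤ → M := fun j => (j.negOnePow : ℤ) • P j
  have hsign (i : ℤ) : (i.negOnePow : ℤ) • (P (i - 1) + P i) = f i - f (i - 1) := by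
    have : i.negOnePow = -(i - 1).negOnePow := by
      rw [← Int.negOnePow_succ, sub_add_cancel]
    simp only [f, this, Units.val_neg, neg_smul, smul_add]
    abel
  have hf : support f ⊆ s :=
    (support_smul_subset_right (fun j : ℤ => (j.negOnePow : ℤ)) P).trans hP
  have hf' : support (fun i => f (i - 1)) ⊆ s :=
    (support_smul_subset_right (fun i : ℤ => ((i - 1).negOnePow : ℤ)) _).trans hP'
  simp only [hsign, Finset.sum_sub_distrib]
  rw [Finset.sum_comp_sub_one_of_support_subset s f hf hf', sub_self]

section Trace

variable {C : Type*} [Category C] [Preadditive C]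

theorem traceClass_add {x : C} (f g : x ⟶ x) :
    traceClass (f + g) = traceClass f + traceClass g := by
  simp [traceClass, QuotientAddGroup.mk_add]

theorem traceClass_zero (x : C) : traceClass (0 : x ⟶ x) = 0 := by
  simp [traceClass]

theorem traceClass_comp_comm {x y : C} (f : x ⟶ y) (g : y ⟶ x) :
    traceClass (f ≫ g) = traceClass (g ≫ f) :=
  (QuotientAddGroup.eq_iff_sub_mem).mpr (AddSubgroup.subset_closure ⟨x, y, f, g, rfl⟩)

end Trace

namespace Homotopy

variable {C : Type*} [Category C] [Preadditive C]
  {A : HomologicalComplex C (ComplexShape.down ℤ)} {F G : A ⟶ A}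

theorem traceClass_dNext (h : Homotopy F G) (i : ℤ) :
    traceClass (dNext i h.hom) = traceClass (prevD (i - 1) h.hom) := by
  have hrel : (ComplexShape.down ℤ).Rel i (i - 1) := by simp
  rw [dNext_eq h.hom hrel, prevD_eq h.hom hrel, traceClass_comp_comm]

theorem traceClass_f_eq (h : Homotopy F G) (i : ℤ) :
    traceClass (F.f i) =
      traceClass (prevD (i - 1) h.hom) + traceClass (prevD i h.hom) + traceClass (G.f i) := by
  rw [h.comm i, traceClass_add, traceClass_add, traceClass_dNext]

end Homotopy

theorem prevD_eq_zero_of_isZero_succ {C : Type*} [Category C] [Preadditive C]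
    {K L : HomologicalComplex C (ComplexShape.down ℤ)} (f : ∀ i j, K.X i ⟶ L.X j) {j : ℤ}
    (hj : IsZero (L.X (j + 1))) : prevD j f = 0 := by
  rw [prevD_eq f (j' := j + 1) (by simp), hj.eq_of_tgt (f j (j + 1)) 0, zero_comp]

/-- If two chain endomorphisms `F, G` of a bounded complex `A` over a linear
category `𝒞` are chain homotopic, then their traced Lefschetz numbers agree:
`Σᵢ (−1)ⁱ [Fᵢ] = Σᵢ (−1)ⁱ [Gᵢ]` in `Tr(𝒞)`. -/
theorem lefschetz_homotopy_invariant {C : Type*} [Category C] [Preadditive C]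
    (A : HomologicalComplex C (ComplexShape.down ℤ))
    (F G : A ⟶ A) (h : Homotopy F G)
    (s : Finset ℤ) (hbd : ∀ i ∉ s, IsZero (A.X i)) :
    ∑ i ∈ s, (Int.negOnePow i : ℤ) • traceClass (F.f i) =
      ∑ i ∈ s, (Int.negOnePow i : ℤ) • traceClass (G.f i) := by
  set P : ℤ → CatTrace C := fun j => traceClass (prevD j h.hom)
  have hP : support P ⊆ s := support_subset_iff'.2 fun j hj => by
    simp only [P, (hbd j hj).eq_of_src (prevD j h.hom) 0, traceClass_zero]
  have hP' : support (fun i => P (i - 1)) ⊆ s := support_subset_iff'.2 fun i hi => by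
    simp only [P, prevD_eq_zero_of_isZero_succ h.hom (j := i - 1) (by simpa using hbd i hi),
      traceClass_zero]
  calc ∑ i ∈ s, (i.negOnePow : ℤ) • traceClass (F.f i)
      = ∑ i ∈ s, (i.negOnePow : ℤ) • (P (i - 1) + P i)
          + ∑ i ∈ s, (i.negOnePow : ℤ) • traceClass (G.f i) := by
        rw [← Finset.sum_add_distrib]
        refine Finset.sum_congr rfl fun i _ => ?_
        rw [h.traceClass_f_eq, smul_add]
    _ = ∑ i ∈ s, (i.negOnePow : ℤ) • traceClass (G.f i) := by
        rw [Finset.sum_negOnePow_smul_add_sub_one_eq_zero s P hP hP', zero_add]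
end
end

section
/- For an upper-triangular linear category 𝒞 (one in which there is no nonzero cycle x₀ → x₁ → ⋯ → xₙ → x₀ of morphisms unless all objects coincide), the trace decomposes as a direct sum over objects: Tr(𝒞) ≅ ⊕_{x ∈ Ob(𝒞)} 𝒞(x,x)/[𝒞(x,x), 𝒞(x,x)]. -/
open CategoryTheory
open scoped DirectSum Classical

noncomputable section

/-- The quotient of the endomorphism ring of `x` by the additive span of
commutators, `𝒞(x,x)/[𝒞(x,x), 𝒞(x,x)]`. -/
abbrev HH0End (C : Type*) [Category C] [Preadditive C] (x : C) :=
  (x ⟶ x) ⧸ AddSubgroup.closure { a : x ⟶ x | ∃ p q : x ⟶ x, a = p ≫ q - q ≫ p }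

/-- For an upper-triangular linear category `𝒞` (there is a partial order on the
objects such that `𝒞(x,y) ≠ 0` implies `x ≤ y`), the trace decomposes as
`Tr(𝒞) ≅ ⊕_x 𝒞(x,x)/[𝒞(x,x), 𝒞(x,x)]`. -/
theorem catTrace_upperTriangular {C : Type*} [Category C] [Preadditive C]
    (r : C → C → Prop) (hpo : IsPartialOrder C r)
    (hut : ∀ x y : C, (∃ f : x ⟶ y, f ≠ 0) → r x y) :
    ∃ e : CatTrace C ≃+ (⨁ x : C, HH0End C x),
      ∀ (x : C) (f : x ⟶ x),
        e (traceClass f) =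
          DirectSum.of (fun x : C => HH0End C x) x (QuotientAddGroup.mk f) := by
  classical
  let φ : (⨁ x : C, (x ⟶ x)) →+ ⨁ x : C, HH0End C x :=
    DirectSum.toAddMonoid fun x =>
      (DirectSum.of (fun x : C => HH0End C x) x).comp
        (QuotientAddGroup.mk' _)
  have hφof : ∀ (x : C) (f : x ⟶ x),
      φ (DirectSum.of (fun z : C => z ⟶ z) x f)
        = DirectSum.of (fun x : C => HH0End C x) x (QuotientAddGroup.mk f) := by
    intro x f
    simp [φ, DirectSum.toAddMonoid_of]
  have hφ : traceRelations C ≤ φ.ker := by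
    rw [traceRelations, AddSubgroup.closure_le]
    rintro h ⟨x, y, f, g, rfl⟩
    simp only [SetLike.mem_coe, AddMonoidHom.mem_ker]
    by_cases hxy : x = y
    · subst hxy
      have h0 : (QuotientAddGroup.mk (f ≫ g - g ≫ f) : HH0End C x) = 0 := by
        rw [QuotientAddGroup.eq_zero_iff]
        exact AddSubgroup.subset_closure ⟨f, g, rfl⟩
      rw [map_sub, hφof, hφof, ← map_sub, ← QuotientAddGroup.mk_sub, h0, map_zero]
    · have hfg : f ≫ g = 0 ∧ g ≫ f = 0 := by
        by_cases hf : f = 0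
        · simp [hf]
        by_cases hg : g = 0
        · simp [hg]
        exact absurd (hpo.antisymm _ _ (hut x y ⟨f, hf⟩) (hut y x ⟨g, hg⟩)) hxy
      rw [hfg.1, hfg.2]
      simp
  let ebar : CatTrace C →+ ⨁ x : C, HH0End C x :=
    QuotientAddGroup.lift (traceRelations C) φ hφ
  have hψx : ∀ x : C,
      AddSubgroup.closure { a : x ⟶ x | ∃ p q : x ⟶ x, a = p ≫ q - q ≫ p } ≤
        ((QuotientAddGroup.mk' (traceRelations C)).comp
          (DirectSum.of (fun z : C => z ⟶ z) x)).ker := by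
    intro x
    rw [AddSubgroup.closure_le]
    rintro a ⟨p, q, rfl⟩
    simp only [SetLike.mem_coe, AddMonoidHom.mem_ker, AddMonoidHom.comp_apply,
      QuotientAddGroup.mk'_apply, map_sub]
    rw [← QuotientAddGroup.mk_sub, QuotientAddGroup.eq_zero_iff]
    exact AddSubgroup.subset_closure ⟨x, x, p, q, rfl⟩
  let ψ : (⨁ x : C, HH0End C x) →+ CatTrace C :=
    DirectSum.toAddMonoid fun x =>
      QuotientAddGroup.lift _
        ((QuotientAddGroup.mk' (traceRelations C)).comp
          (DirectSum.of (fun z : C => z ⟶ z) x)) (hψx x)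
  have hψof : ∀ (x : C) (f : x ⟶ x),
      ψ (DirectSum.of (fun x : C => HH0End C x) x (QuotientAddGroup.mk f))
        = QuotientAddGroup.mk (DirectSum.of (fun z : C => z ⟶ z) x f) := by
    intro x f
    simp [ψ, DirectSum.toAddMonoid_of]
  have key : ∀ a : ⨁ x : C, (x ⟶ x), ψ (φ a) = QuotientAddGroup.mk a := by
    intro a
    induction a using DirectSum.induction_on with
    | zero => simp
    | of x f => rw [hφof, hψof]
    | add a b ha hb =>
        rw [map_add, map_add, ha, hb]
        rfl
  have left_inv : ∀ q : CatTrace C, ψ (ebar q) = q := by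
    intro q
    obtain ⟨a, rfl⟩ := QuotientAddGroup.mk_surjective q
    exact key a
  have right_inv : ∀ d : ⨁ x : C, HH0End C x, ebar (ψ d) = d := by
    intro d
    induction d using DirectSum.induction_on with
    | zero => simp
    | of x q =>
        obtain ⟨f, rfl⟩ := QuotientAddGroup.mk_surjective q
        rw [hψof]
        exact hφof x f
    | add a b ha hb => rw [map_add, map_add, ha, hb]
  refine ⟨AddEquiv.mk' ⟨⇑ebar, ⇑ψ, left_inv, right_inv⟩ ebar.map_add, ?_⟩
  intro x f
  exact hφof x f
end
end

section
/- For a strongly upper-triangular linear category 𝒞 (upper-triangular with 𝒞(x,x) ≅ ℤ for all objects x), the trace is the free abelian group on the set of objects: Tr(𝒞) ≅ ℤ·Ob(𝒞). -/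
open CategoryTheory
open scoped DirectSum Classical

noncomputable section

/-- For a strongly upper-triangular linear category `𝒞` (upper-triangular with
every endomorphism ring isomorphic to `ℤ`), the trace is the free abelian group
on the set of objects: `Tr(𝒞) ≅ ℤ·Ob(𝒞)`. -/
theorem catTrace_stronglyUpperTriangular {C : Type*} [Category C] [Preadditive C]
    (r : C → C → Prop) (hpo : IsPartialOrder C r)
    (hut : ∀ x y : C, (∃ f : x ⟶ y, f ≠ 0) → r x y)
    (hend : ∀ x : C, Nonempty (End x ≃+* ℤ)) :
    Nonempty (CatTrace C ≃+ FreeAbelianGroup C) := by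
  have hbot : traceRelations C = ⊥ := by
    rw [eq_bot_iff, traceRelations, AddSubgroup.closure_le]
    rintro h ⟨x, y, f, g, rfl⟩
    by_cases hf : f = 0
    · subst hf
      simp
    by_cases hg : g = 0
    · subst hg
      simp
    have hxy : x = y := hpo.antisymm x y (hut x y ⟨f, hf⟩) (hut y x ⟨g, hg⟩)
    subst hxy
    have hc : f ≫ g = g ≫ f := by
      obtain ⟨e⟩ := hend x
      have key : ∀ a b : End x, a * b = b * a := fun a b =>
        e.injective (by rw [map_mul, map_mul, mul_comm])
      exact key g f
    rw [hc]
    simp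
  have e1 : CatTrace C ≃+ (⨁ x : C, (x ⟶ x)) :=
    (QuotientAddGroup.quotientAddEquivOfEq hbot).trans QuotientAddGroup.quotientBot
  have e2 : (⨁ x : C, (x ⟶ x)) ≃+ (⨁ _ : C, ℤ) :=
    DFinsupp.mapRange.addEquiv (fun x => (hend x).some.toAddEquiv)
  have e3 : (⨁ _ : C, ℤ) ≃+ (C →₀ ℤ) := (finsuppLEquivDirectSum ℤ ℤ C).symm.toAddEquiv
  exact ⟨e1.trans (e2.trans (e3.trans (FreeAbelianGroup.equivFinsupp C).symm))⟩
end
end
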